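/- arXiv:2102.08647 — 5 statements merged into one kernel-verified Lean document; each statement's English description precedes it below -/
import Mathlib

section
/- Let Lₙ be the monoid presented by generators x₁,…,xₙ and relations xᵢ² = xᵢ (1 ≤ i ≤ n), xᵢxⱼ = xⱼxᵢ (1 < i−j < n), and xᵢxᵢ₊₁xᵢ = xᵢ₊₁xᵢxᵢ₊₁ = xᵢxᵢ₊₁ (1 ≤ i < n). Given an Lₙ-chain, that is, idempotent maps σ₁,…,σₙ : A × A → A × A satisfying (σᵢ × id)(id × σᵢ₊₁)(σᵢ × id) = (id × σᵢ₊₁)(σᵢ × id)(id × σᵢ₊₁) = (σᵢ × id)(id × σᵢ₊₁) for all 1 ≤ i < n, there is a monoid action of Lₙ on A^{n+1} in which xᵢ acts as id^{i−1} × σᵢ × id^{n−i} (applying σᵢ to coordinates i and i+1). -/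
/-- Apply a map on `A × A` to the first two coordinates of `A × A × A`. -/
def applyLeft {A : Type*} (g : A × A → A × A) : A × A × A → A × A × A :=
  fun p => ((g (p.1, p.2.1)).1, (g (p.1, p.2.1)).2, p.2.2)

/-- Apply a map on `A × A` to the last two coordinates of `A × A × A`. -/
def applyRight {A : Type*} (g : A × A → A × A) : A × A × A → A × A × A :=
  fun p => (p.1, g p.2)

/-- The defining relations of the Hecke–Kiselman monoid `Lₙ` of type `Aₙ`
(generators indexed by `Fin n`, with `xᵢ` corresponding to `i - 1 : Fin n`):
idempotence, far-commutativity, and the braid-like Hecke–Kiselman relations. -/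
def relL (n : ℕ) : FreeMonoid (Fin n) → FreeMonoid (Fin n) → Prop := fun w w' =>
  (∃ i : Fin n, w = .of i * .of i ∧ w' = .of i) ∨
  (∃ i j : Fin n, (i : ℕ) + 2 ≤ (j : ℕ) ∧ w = .of i * .of j ∧ w' = .of j * .of i) ∨
  (∃ i j : Fin n, (i : ℕ) + 1 = (j : ℕ) ∧
    ((w = .of i * .of j * .of i ∧ w' = .of j * .of i * .of j) ∨
     (w = .of i * .of j * .of i ∧ w' = .of i * .of j)))

/-- The Hecke–Kiselman monoid `Lₙ` of type `Aₙ`. -/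
def HKL (n : ℕ) := PresentedMonoid (relL n)

instance (n : ℕ) : Monoid (HKL n) := inferInstanceAs (Monoid (PresentedMonoid (relL n)))

/-- The map `id^{i-1} × σᵢ × id^{n-i}` applying `σᵢ` to coordinates `i` and `i+1`
of `A^{n+1}`. -/
def genL {n : ℕ} {A : Type*} (σ : Fin n → A × A → A × A) (i : Fin n) :
    Function.End (Fin (n + 1) → A) := fun v =>
  Function.update (Function.update v i.castSucc (σ i (v i.castSucc, v i.succ)).1)
    i.succ (σ i (v i.castSucc, v i.succ)).2

/-- Auxiliary: apply `g` to coordinates `i` and `i+1`. -/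
def act2 {n : ℕ} {A : Type*} (i : Fin n) (g : A × A → A × A) :
    (Fin (n + 1) → A) → (Fin (n + 1) → A) := fun v =>
  Function.update (Function.update v i.castSucc (g (v i.castSucc, v i.succ)).1)
    i.succ (g (v i.castSucc, v i.succ)).2

lemma act2_comp {n : ℕ} {A : Type*} (i : Fin n) (g g' : A × A → A × A) :
    act2 i (g ∘ g') = act2 i g ∘ act2 i g' := by
  funext v k
  have h1 : (i.castSucc : Fin (n+1)) ≠ i.succ := by simp [Fin.ext_iff]
  rcases eq_or_ne k i.castSucc with rfl | hc
  · simp [act2, Function.update_apply, h1, h1.symm]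
  rcases eq_or_ne k i.succ with rfl | hs
  · simp [act2, Function.update_apply, h1, h1.symm]
  · simp [act2, Function.update_apply, h1, h1.symm, hc, hs]

/-- Auxiliary: apply `g` to coordinates `i`, `i+1`, `j+1` (intended `j = i+1`). -/
def act3 {n : ℕ} {A : Type*} (i j : Fin n) (g : A × A × A → A × A × A) :
    (Fin (n + 1) → A) → (Fin (n + 1) → A) := fun v =>
  Function.update (Function.update (Function.update v i.castSucc
      (g (v i.castSucc, v i.succ, v j.succ)).1)
    i.succ (g (v i.castSucc, v i.succ, v j.succ)).2.1)
    j.succ (g (v i.castSucc, v i.succ, v j.succ)).2.2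

section
variable {n : ℕ} {A : Type*} {i j : Fin n} (h : (i : ℕ) + 1 = (j : ℕ))

include h in
lemma act3_comp (g g' : A × A × A → A × A × A) :
    act3 i j (g ∘ g') = act3 i j g ∘ act3 i j g' := by
  funext v k
  have h1 : (i.castSucc : Fin (n+1)) ≠ i.succ := by simp [Fin.ext_iff]
  have h2 : (i.castSucc : Fin (n+1)) ≠ j.succ := by simp [Fin.ext_iff]; omega
  have h3 : (i.succ : Fin (n+1)) ≠ j.succ := by simp [Fin.ext_iff]; omega
  rcases eq_or_ne k i.castSucc with rfl | hc
  · simp [act3, Function.update_apply, h1, h2, h3, h1.symm, h2.symm, h3.symm]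
  rcases eq_or_ne k i.succ with rfl | hs
  · simp [act3, Function.update_apply, h1, h2, h3, h1.symm, h2.symm, h3.symm]
  rcases eq_or_ne k j.succ with rfl | ht
  · simp [act3, Function.update_apply, h1, h2, h3, h1.symm, h2.symm, h3.symm]
  · simp [act3, Function.update_apply, h1, h2, h3, h1.symm, h2.symm, h3.symm, hc, hs, ht]

include h in
lemma act3_left (g : A × A → A × A) : act3 i j (applyLeft g) = act2 i g := by
  funext v k
  have h1 : (i.castSucc : Fin (n+1)) ≠ i.succ := by simp [Fin.ext_iff]
  have h2 : (i.castSucc : Fin (n+1)) ≠ j.succ := by simp [Fin.ext_iff]; omega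
  have h3 : (i.succ : Fin (n+1)) ≠ j.succ := by simp [Fin.ext_iff]; omega
  rcases eq_or_ne k i.castSucc with rfl | hc
  · simp [act3, act2, applyLeft, Function.update_apply, h1, h2, h3, h1.symm, h2.symm, h3.symm]
  rcases eq_or_ne k i.succ with rfl | hs
  · simp [act3, act2, applyLeft, Function.update_apply, h1, h2, h3, h1.symm, h2.symm, h3.symm]
  rcases eq_or_ne k j.succ with rfl | ht
  · simp [act3, act2, applyLeft, Function.update_apply, h1, h2, h3, h1.symm, h2.symm, h3.symm]
  · simp [act3, act2, applyLeft, Function.update_apply, hc, hs, ht]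

include h in
lemma act3_right (g : A × A → A × A) : act3 i j (applyRight g) = act2 j g := by
  have hjc : (j.castSucc : Fin (n+1)) = i.succ := by simp [Fin.ext_iff]; omega
  funext v k
  have h1 : (i.castSucc : Fin (n+1)) ≠ i.succ := by simp [Fin.ext_iff]
  have h2 : (i.castSucc : Fin (n+1)) ≠ j.succ := by simp [Fin.ext_iff]; omega
  have h3 : (i.succ : Fin (n+1)) ≠ j.succ := by simp [Fin.ext_iff]; omega
  rcases eq_or_ne k i.castSucc with rfl | hc
  · simp [act3, act2, applyRight, hjc, Function.update_apply, h1, h2, h3, h1.symm, h2.symm, h3.symm]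
  rcases eq_or_ne k i.succ with rfl | hs
  · simp [act3, act2, applyRight, hjc, Function.update_apply, h1, h2, h3, h1.symm, h2.symm, h3.symm]
  rcases eq_or_ne k j.succ with rfl | ht
  · simp [act3, act2, applyRight, hjc, Function.update_apply, h1, h2, h3, h1.symm, h2.symm, h3.symm]
  · simp [act3, act2, applyRight, hjc, Function.update_apply, hc, hs, ht]

end

lemma act2_far {n : ℕ} {A : Type*} {i j : Fin n} (h : (i : ℕ) + 2 ≤ (j : ℕ))
    (g g' : A × A → A × A) : act2 i g ∘ act2 j g' = act2 j g' ∘ act2 i g := by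
  funext v k
  have h1 : (i.castSucc : Fin (n+1)) ≠ i.succ := by simp [Fin.ext_iff]
  have h2 : (i.castSucc : Fin (n+1)) ≠ j.castSucc := by simp [Fin.ext_iff]; omega
  have h3 : (i.castSucc : Fin (n+1)) ≠ j.succ := by simp [Fin.ext_iff]; omega
  have h4 : (i.succ : Fin (n+1)) ≠ j.castSucc := by simp [Fin.ext_iff]; omega
  have h5 : (i.succ : Fin (n+1)) ≠ j.succ := by simp [Fin.ext_iff]; omega
  have h6 : (j.castSucc : Fin (n+1)) ≠ j.succ := by simp [Fin.ext_iff]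
  rcases eq_or_ne k i.castSucc with rfl | hc
  · simp [act2, Function.update_apply, h1, h2, h3, h4, h5, h6, h1.symm, h2.symm, h3.symm, h4.symm, h5.symm, h6.symm]
  rcases eq_or_ne k i.succ with rfl | hs
  · simp [act2, Function.update_apply, h1, h2, h3, h4, h5, h6, h1.symm, h2.symm, h3.symm, h4.symm, h5.symm, h6.symm]
  rcases eq_or_ne k j.castSucc with rfl | hc'
  · simp [act2, Function.update_apply, h1, h2, h3, h4, h5, h6, h1.symm, h2.symm, h3.symm, h4.symm, h5.symm, h6.symm]
  rcases eq_or_ne k j.succ with rfl | hs'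
  · simp [act2, Function.update_apply, h1, h2, h3, h4, h5, h6, h1.symm, h2.symm, h3.symm, h4.symm, h5.symm, h6.symm]
  · simp [act2, Function.update_apply, hc, hs, hc', hs']

theorem stmt4 (n : ℕ) (A : Type*) (σ : Fin n → A × A → A × A)
    (hidem : ∀ i, σ i ∘ σ i = σ i)
    (hchain : ∀ i j : Fin n, (i : ℕ) + 1 = (j : ℕ) →
      applyLeft (σ i) ∘ applyRight (σ j) ∘ applyLeft (σ i)
        = applyRight (σ j) ∘ applyLeft (σ i) ∘ applyRight (σ j) ∧
      applyLeft (σ i) ∘ applyRight (σ j) ∘ applyLeft (σ i)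
        = applyLeft (σ i) ∘ applyRight (σ j)) :
    ∃ φ : HKL n →* Function.End (Fin (n + 1) → A),
      ∀ i : Fin n, φ (PresentedMonoid.of (relL n) i) = genL σ i := by
  refine ⟨PresentedMonoid.lift (genL σ) ?_, fun i => rfl⟩
  rintro a b (⟨i, rfl, rfl⟩ | ⟨i, j, hij, rfl, rfl⟩ | ⟨i, j, hij, (⟨rfl, rfl⟩ | ⟨rfl, rfl⟩)⟩) <;>
    simp only [map_mul, FreeMonoid.lift_eval_of]
  · show act2 i (σ i) ∘ act2 i (σ i) = act2 i (σ i)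
    rw [← act2_comp, hidem]
  · show act2 i (σ i) ∘ act2 j (σ j) = act2 j (σ j) ∘ act2 i (σ i)
    exact act2_far hij _ _
  · show (act2 i (σ i) ∘ act2 j (σ j)) ∘ act2 i (σ i)
      = (act2 j (σ j) ∘ act2 i (σ i)) ∘ act2 j (σ j)
    rw [← act3_left hij (σ i), ← act3_right hij (σ j), ← act3_comp hij, ← act3_comp hij,
      ← act3_comp hij, ← act3_comp hij]
    exact congrArg _ (hchain i j hij).1
  · show (act2 i (σ i) ∘ act2 j (σ j)) ∘ act2 i (σ i) = act2 i (σ i) ∘ act2 j (σ j)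
    rw [← act3_left hij (σ i), ← act3_right hij (σ j), ← act3_comp hij, ← act3_comp hij]
    exact congrArg _ (hchain i j hij).2
end

section
/- For a permutation s of {1,…,n+1}, define r(s) = ((a₁,…,a_k),(b₁,…,b_k)) where a₁ < … < a_k is the ordered list of all indices i with s(i) > i, and b_t = s(a_t). Then the map s ↦ r(s) is a bijection between 321-avoiding permutations of {1,…,n+1} and the set II_n of pairs of integer sequences (a₁ < a₂ < … < a_k, b₁ < b₂ < … < b_k) with 0 ≤ k ≤ n, 1 ≤ a_t, b_k ≤ n+1, and a_t < b_t for all t. -/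
/-!
A permutation avoids 321 exactly when it is increasing both on its excedances `{i | i < s i}`
and on the remaining points. So a 321-avoiding permutation is determined by its excedances and
their values: comparing two candidates at the least point where they differ, the smaller value
would have to be taken again at a later non-excedance, breaking monotonicity there.
Conversely, for `a < b` componentwise, glue the increasing bijection `{aₜ} → {bₜ}` to the
increasing bijection between the complements. No point `x` outside `{aₜ}` becomes an excedance:
the `|Iic x|` preimages of `Iic x` cannot all lie in `Iio x`, and any `y > x` among them
contradicts either `y < s y` or monotonicity on the complement.
-/

/-- A permutation is 321-avoiding if no three indices `i < j < k` are completely reversed. -/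
def Avoids321 {m : ℕ} (s : Equiv.Perm (Fin m)) : Prop :=
  ¬ ∃ i j k : Fin m, i < j ∧ j < k ∧ s k < s j ∧ s j < s i

/-- `IIn n` : increasing couples of increasing integer sequences bounded by `1` and `n+1`:
pairs of strictly increasing lists `(a₁ < … < a_k, b₁ < … < b_k)` of equal length `k ≤ n`,
with `1 ≤ aₜ`, all `bₜ ≤ n+1`, and `aₜ < bₜ` componentwise. -/
def IIn (n : ℕ) : Set (List ℕ × List ℕ) :=
  {p | p.1.length = p.2.length ∧ p.1.length ≤ n ∧
    p.1.Chain' (· < ·) ∧ p.2.Chain' (· < ·) ∧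
    (∀ x ∈ p.1, 1 ≤ x) ∧ (∀ y ∈ p.2, y ≤ n + 1) ∧
    ∀ (t : ℕ) (h1 : t < p.1.length) (h2 : t < p.2.length), p.1[t] < p.2[t]}

/-- The ordered list of excedances of a permutation of `{1, …, n+1}`
(indices `i` with `i < s i`), encoded as elements of `{1, …, n+1}`. -/
def excedanceList {n : ℕ} (s : Equiv.Perm (Fin (n + 1))) : List (Fin (n + 1)) :=
  (List.finRange (n + 1)).filter (fun i => decide (i < s i))

/-- The right sequence couple `r(s) = ((a₁,…,a_k), (b₁,…,b_k))` of a permutation: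
`(aₜ)` is the ordered list of excedances, and `bₜ = s(aₜ)`, written in `{1, …, n+1}`. -/
def rightCouple {n : ℕ} (s : Equiv.Perm (Fin (n + 1))) : List ℕ × List ℕ :=
  ((excedanceList s).map (fun i => (i : ℕ) + 1),
   (excedanceList s).map (fun i => ((s i : Fin (n + 1)) : ℕ) + 1))

open Finset

namespace Equiv.Perm

variable {α : Type*} [LinearOrder α]

section LocallyFiniteOrderBot

variable [LocallyFiniteOrderBot α] (s : Perm α)

theorem exists_gt_apply_le_of_lt_apply {x : α} (hx : x < s x) : ∃ y, x < y ∧ s y ≤ x := by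
  have hcard : #(Iio x) < #((Iic x).map s.symm.toEmbedding) := by
    have : 0 < #(Iic x) := card_pos.2 ⟨x, mem_Iic.2 le_rfl⟩
    rw [card_map, card_Iio_eq_card_Iic_sub_one]
    omega
  obtain ⟨y, hy, hyx⟩ := exists_mem_notMem_of_card_lt_card hcard
  obtain ⟨z, hzx, rfl⟩ := mem_map.1 hy
  rw [mem_Iio, not_lt] at hyx
  rw [mem_Iic] at hzx
  refine ⟨s.symm z, hyx.lt_of_ne ?_, by simpa using hzx⟩
  rintro rfl
  exact (hzx.trans_lt (by simpa using hx)).false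

theorem exists_lt_apply_gt_of_apply_le {i j : α} (hi : s i ≤ i) (hij : i < j) (hji : s j < s i) :
    ∃ k < i, s i < s k := by
  have hcard : #(Iio (s i)) < #((insert j (Iio i)).map s.toEmbedding) := by
    rw [card_map, card_insert_of_notMem (by simpa using hij.le)]
    exact Nat.lt_succ_of_le (card_le_card (Iio_subset_Iio hi))
  obtain ⟨y, hy, hyi⟩ := exists_mem_notMem_of_card_lt_card hcard
  obtain ⟨k, hk, rfl⟩ := mem_map.1 hy
  rw [mem_Iio, not_lt] at hyi
  rcases mem_insert.1 hk with rfl | hki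
  · exact absurd hji hyi.not_gt
  · have hki : k < i := mem_Iio.1 hki
    exact ⟨k, hki, hyi.lt_of_ne (s.injective.ne hki.ne')⟩

end LocallyFiniteOrderBot

variable {s t : Perm α} {E : Set α}

theorem setOf_lt_apply_eq [LocallyFiniteOrderBot α]
    (hE : ∀ x ∈ E, x < s x) (hEc : StrictMonoOn s Eᶜ) : {x | x < s x} = E := by
  refine Set.Subset.antisymm (fun x hx => ?_) hE
  by_contra hxE
  obtain ⟨y, hxy, hyx⟩ := s.exists_gt_apply_le_of_lt_apply hx
  by_cases hyE : y ∈ E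
  · exact ((hE y hyE).trans_le hyx).not_gt hxy
  · exact ((hEc hxE hyE hxy).trans_le hyx).not_gt hx

theorem not_apply_lt_of_eqOn (hst : Set.EqOn s t E) (ht : StrictMonoOn t Eᶜ) {x : α}
    (hx : x ∉ E) (hbelow : ∀ y < x, s y = t y) : ¬ s x < t x := by
  intro hlt
  obtain ⟨y, hy⟩ : ∃ y, t y = s x := ⟨t.symm (s x), t.apply_symm_apply (s x)⟩
  have hxy : x < y := by
    rcases lt_trichotomy y x with hyx | rfl | hxy
    · exact absurd (s.injective ((hbelow y hyx).trans hy)) hyx.ne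
    · exact absurd hy hlt.ne'
    · exact hxy
  have hyE : y ∉ E := fun hyE => hxy.ne' (s.injective ((hst hyE).trans hy))
  exact lt_asymm hlt (hy ▸ ht hx hyE hxy)

theorem eq_of_eqOn_of_strictMonoOn_compl [WellFoundedLT α] (hst : Set.EqOn s t E)
    (hs : StrictMonoOn s Eᶜ) (ht : StrictMonoOn t Eᶜ) : s = t := by
  ext x
  induction x using WellFoundedLT.induction with
  | _ x ih =>
    by_cases hx : x ∈ E
    · rw [hst hx]
    exact le_antisymm (not_lt.1 (not_apply_lt_of_eqOn hst.symm hs hx fun y hy => (ih y hy).symm))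
      (not_lt.1 (not_apply_lt_of_eqOn hst ht hx ih))

theorem exists_eq_orderIso_strictMonoOn_compl [Fintype α] {E B : Finset α} (e : E ≃o B) :
    ∃ s : Perm α, (∀ x : E, s x = e x) ∧ StrictMonoOn s (↑E)ᶜ := by
  have hcard : Fintype.card {x // x ∉ E} = Fintype.card {x // x ∉ B} := by
    simp only [Fintype.card_subtype_compl, Fintype.card_congr e.toEquiv]
  let f : {x // x ∉ E} ≃o {x // x ∉ B} :=
    (Fintype.orderIsoFinOfCardEq _ hcard).symm.trans (Fintype.orderIsoFinOfCardEq _ rfl)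
  have hf (x : α) (hx : x ∉ E) : Equiv.subtypeCongr e.toEquiv f.toEquiv x = f ⟨x, hx⟩ := by
    simp [Equiv.subtypeCongr, sumCompl_symm_apply_of_neg hx]
  refine ⟨Equiv.subtypeCongr e.toEquiv f.toEquiv, fun x => ?_, fun x hx y hy hxy => ?_⟩
  · simp [Equiv.subtypeCongr]
  · rw [hf x hx, hf y hy]
    exact f.strictMono (Subtype.mk_lt_mk.2 hxy)

end Equiv.Perm

theorem List.Pairwise.orderEmbOfFin_toFinset {α : Type*} [LinearOrder α] {l : List α}
    (hl : l.Pairwise (· < ·)) {k : ℕ} (h : l.toFinset.card = k) (t : ℕ) (ht : t < k) :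
    l.toFinset.orderEmbOfFin h ⟨t, ht⟩ =
      l[t]'(by rwa [← List.toFinset_card_of_nodup hl.nodup, h]) := by
  rw [Finset.orderEmbOfFin_apply]
  exact List.getElem_of_eq ((List.toFinset_sort _ hl.nodup).2 (hl.imp le_of_lt)) _

theorem List.Pairwise.exists_orderIso_toFinset {α : Type*} [LinearOrder α] {a b : List α}
    (ha : a.Pairwise (· < ·)) (hb : b.Pairwise (· < ·)) (hlen : a.length = b.length) :
    ∃ e : a.toFinset ≃o b.toFinset, ∀ (t : ℕ) (h₁ : t < a.length) (h₂ : t < b.length),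
      (e ⟨a[t], List.mem_toFinset.2 (List.getElem_mem h₁)⟩ : α) = b[t] := by
  have hA : a.toFinset.card = a.length := List.toFinset_card_of_nodup ha.nodup
  have hB : b.toFinset.card = a.length := hlen ▸ List.toFinset_card_of_nodup hb.nodup
  refine ⟨(a.toFinset.orderIsoOfFin hA).symm.trans (b.toFinset.orderIsoOfFin hB),
    fun t h₁ h₂ => ?_⟩
  have hat : ⟨a[t], List.mem_toFinset.2 (List.getElem_mem h₁)⟩ =
      a.toFinset.orderIsoOfFin hA ⟨t, h₁⟩ :=
    Subtype.ext (by rw [coe_orderIsoOfFin_apply, ha.orderEmbOfFin_toFinset])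
  rw [OrderIso.trans_apply, hat, OrderIso.symm_apply_apply,
    coe_orderIsoOfFin_apply, hb.orderEmbOfFin_toFinset]

namespace Avoids321

variable {m : ℕ} {s : Equiv.Perm (Fin m)}

theorem strictMonoOn_excedances (h : Avoids321 s) : StrictMonoOn s {i | i < s i} := by
  intro i _ j (hj : j < s j) hij
  by_contra! hji
  obtain ⟨k, hjk, hk⟩ := s.exists_gt_apply_le_of_lt_apply hj
  exact h ⟨i, j, k, hij, hjk, hk.trans_lt hj, hji.lt_of_ne (s.injective.ne hij.ne')⟩

theorem strictMonoOn_compl_excedances (h : Avoids321 s) :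
    StrictMonoOn s {i | i < s i}ᶜ := by
  intro i (hi : ¬ i < s i) j _ hij
  by_contra! hji
  have hji : s j < s i := hji.lt_of_ne (s.injective.ne hij.ne')
  obtain ⟨k, hki, hk⟩ := s.exists_lt_apply_gt_of_apply_le (not_lt.1 hi) hij hji
  exact h ⟨k, i, j, hki, hij, hji, hk⟩

end Avoids321

theorem avoids321_iff_strictMonoOn {m : ℕ} {s : Equiv.Perm (Fin m)} :
    Avoids321 s ↔ StrictMonoOn s {i | i < s i} ∧ StrictMonoOn s {i | i < s i}ᶜ := by
  refine ⟨fun h => ⟨h.strictMonoOn_excedances, h.strictMonoOn_compl_excedances⟩, ?_⟩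
  rintro ⟨hexc, hcompl⟩ ⟨i, j, k, hij, hjk, hkj, hji⟩
  -- of the three inversions among `i, j, k`, each must join an excedance to a non-excedance
  have split (a b : Fin m) (hab : a < b) (hba : s b < s a) : ¬ (a < s a ↔ b < s b) := by
    intro hiff
    by_cases ha : a < s a
    · exact (hexc ha (hiff.1 ha) hab).not_gt hba
    · exact (hcompl ha (mt hiff.2 ha) hab).not_gt hba
  have hsplit_ij := split i j hij hji
  have hsplit_jk := split j k hjk hkj
  have hsplit_ik := split i k (hij.trans hjk) (hkj.trans hji)
  tauto

structure IsIncreasingCouple {α : Type*} [LT α] (a b : List α) : Prop where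
  pairwise_fst : a.Pairwise (· < ·)
  pairwise_snd : b.Pairwise (· < ·)
  length_eq : a.length = b.length
  getElem_lt : ∀ (t : ℕ) (h₁ : t < a.length) (h₂ : t < b.length), a[t] < b[t]

section excedanceList

variable {n : ℕ} {s t : Equiv.Perm (Fin (n + 1))}

theorem mem_excedanceList {i : Fin (n + 1)} : i ∈ excedanceList s ↔ i < s i := by
  simp [excedanceList]

theorem pairwise_excedanceList : (excedanceList s).Pairwise (· < ·) :=
  (List.pairwise_lt_finRange _).filter _

-- In `rightCouple`, the ascription `(i : ℕ)` of the first component is elaborated as a coercion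
-- of the whole list, i.e. a `flatMap`.
theorem rightCouple_eq : rightCouple s =
    ((excedanceList s).map (fun i : Fin (n + 1) => (i : ℕ) + 1),
      ((excedanceList s).map s).map (fun i : Fin (n + 1) => (i : ℕ) + 1)) := by
  simp [rightCouple, ← List.map_eq_flatMap]

theorem Avoids321.isIncreasingCouple (h : Avoids321 s) :
    IsIncreasingCouple (excedanceList s) ((excedanceList s).map s) where
  pairwise_fst := pairwise_excedanceList
  pairwise_snd := List.pairwise_map.2 <| pairwise_excedanceList.imp_of_mem
    fun hi hj hij => h.strictMonoOn_excedances (mem_excedanceList.1 hi) (mem_excedanceList.1 hj) hij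
  length_eq := (List.length_map _).symm
  getElem_lt _ _ _ := by
    simpa only [List.getElem_map] using mem_excedanceList.1 (List.getElem_mem _)

theorem Avoids321.eq_of_excedanceList_eq (hs : Avoids321 s) (ht : Avoids321 t)
    (hexc : excedanceList s = excedanceList t)
    (hval : (excedanceList s).map s = (excedanceList t).map t) : s = t := by
  have hset : {i | i < s i} = {i | i < t i} := by
    ext i
    simp only [Set.mem_ofPred_eq, ← mem_excedanceList, hexc]
  have heqOn : Set.EqOn s t {i | i < s i} := fun i hi =>
    List.map_inj_left.1 (hexc ▸ hval) i (mem_excedanceList.2 hi)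
  exact Equiv.Perm.eq_of_eqOn_of_strictMonoOn_compl heqOn hs.strictMonoOn_compl_excedances
    (hset ▸ ht.strictMonoOn_compl_excedances)

end excedanceList

theorem exists_avoids321_of_isIncreasingCouple {n : ℕ} {a b : List (Fin (n + 1))}
    (h : IsIncreasingCouple a b) : ∃ s, Avoids321 s ∧ excedanceList s = a ∧ a.map s = b := by
  obtain ⟨e, he⟩ := h.pairwise_fst.exists_orderIso_toFinset h.pairwise_snd h.length_eq
  obtain ⟨s, hse, hcompl⟩ := Equiv.Perm.exists_eq_orderIso_strictMonoOn_compl e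
  have hexc : ∀ x ∈ (a.toFinset : Set (Fin (n + 1))), x < s x := by
    intro x hx
    obtain ⟨t, ht, rfl⟩ := List.mem_iff_getElem.1 (List.mem_toFinset.1 hx)
    rw [hse ⟨_, hx⟩, he t ht (h.length_eq ▸ ht)]
    exact h.getElem_lt t ht _
  have hset : {x | x < s x} = a.toFinset := Equiv.Perm.setOf_lt_apply_eq hexc hcompl
  have hmono : StrictMonoOn s a.toFinset := fun x hx y hy hxy => by
    rw [hse ⟨x, hx⟩, hse ⟨y, hy⟩]
    exact e.strictMono (Subtype.mk_lt_mk.2 hxy)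
  refine ⟨s, avoids321_iff_strictMonoOn.2 (hset ▸ ⟨hmono, hcompl⟩), ?_, ?_⟩
  · refine pairwise_excedanceList.eq_of_mem_iff h.pairwise_fst fun x => ?_
    rw [mem_excedanceList, ← List.mem_toFinset, ← Finset.mem_coe, ← hset, Set.mem_ofPred_eq]
  · refine List.ext_getElem (by rw [List.length_map, h.length_eq]) fun t h₁ h₂ => ?_
    rw [List.getElem_map, hse ⟨_, List.mem_toFinset.2 (List.getElem_mem _)⟩, he]

theorem IsIncreasingCouple.length_le {n : ℕ} {a b : List (Fin (n + 1))}
    (h : IsIncreasingCouple a b) : a.length ≤ n := by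
  have hlast : ∀ x ∈ a.toFinset, x ∈ univ.erase (Fin.last n) := by
    intro x hx
    obtain ⟨t, ht, rfl⟩ := List.mem_iff_getElem.1 (List.mem_toFinset.1 hx)
    have hlt := h.getElem_lt t ht (h.length_eq ▸ ht)
    exact mem_erase.2 ⟨(hlt.trans_le (Fin.le_last _)).ne, mem_univ _⟩
  calc a.length = #a.toFinset := (List.toFinset_card_of_nodup h.pairwise_fst.nodup).symm
    _ ≤ #(univ.erase (Fin.last n)) := card_le_card hlast
    _ = n := by simp

theorem mem_IIn_iff {n : ℕ} {p : List ℕ × List ℕ} :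
    p ∈ IIn n ↔ ∃ a b : List (Fin (n + 1)), IsIncreasingCouple a b ∧
      p = (a.map fun i : Fin (n + 1) => (i : ℕ) + 1,
        b.map fun i : Fin (n + 1) => (i : ℕ) + 1) := by
  constructor
  · obtain ⟨A, B⟩ := p
    rintro ⟨hlen, -, hA, hB, hA1, hBle, hlt⟩
    dsimp only at hlen hA hB hA1 hBle hlt
    replace hA := List.isChain_iff_pairwise.1 hA
    replace hB := List.isChain_iff_pairwise.1 hB
    have hlift {x : ℕ} (h₁ : 1 ≤ x) (h₂ : x ≤ n + 1) :
        x ∈ Set.range fun i : Fin (n + 1) => (i : ℕ) + 1 :=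
      ⟨⟨x - 1, by omega⟩, by simp; omega⟩
    have hAlift : ∀ x ∈ A, x ∈ Set.range fun i : Fin (n + 1) => (i : ℕ) + 1 := by
      intro x hx
      obtain ⟨t, ht, rfl⟩ := List.mem_iff_getElem.1 hx
      exact hlift (hA1 _ hx) ((hlt t ht (hlen ▸ ht)).le.trans (hBle _ (List.getElem_mem _)))
    have hBlift : ∀ y ∈ B, y ∈ Set.range fun i : Fin (n + 1) => (i : ℕ) + 1 := by
      intro y hy
      obtain ⟨t, ht, rfl⟩ := List.mem_iff_getElem.1 hy
      exact hlift ((hA1 _ (List.getElem_mem _)).trans (hlt t (hlen ▸ ht) ht).le) (hBle _ hy)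
    obtain ⟨a, rfl⟩ : A ∈ Set.range (List.map _) := by rw [Set.range_list_map]; exact hAlift
    obtain ⟨b, rfl⟩ : B ∈ Set.range (List.map _) := by rw [Set.range_list_map]; exact hBlift
    refine ⟨a, b, ⟨?_, ?_, by simpa using hlen, fun t h₁ h₂ => ?_⟩, rfl⟩
    · simpa [List.pairwise_map] using hA
    · simpa [List.pairwise_map] using hB
    · have := hlt t (by simpa using h₁) (by simpa using h₂)
      rw [List.getElem_map, List.getElem_map] at this
      exact Fin.lt_def.2 (by omega)
  · rintro ⟨a, b, h, rfl⟩
    refine ⟨by simp [h.length_eq], by simpa using h.length_le, ?_, ?_, by simp, ?_, ?_⟩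
    · exact List.isChain_iff_pairwise.2 (by simpa [List.pairwise_map] using h.pairwise_fst)
    · exact List.isChain_iff_pairwise.2 (by simpa [List.pairwise_map] using h.pairwise_snd)
    · simp [Fin.is_le]
    · simpa using h.getElem_lt

theorem stmt9 (n : ℕ) :
    Set.BijOn rightCouple {s : Equiv.Perm (Fin (n + 1)) | Avoids321 s} (IIn n) := by
  have hmap : Function.Injective (List.map fun i : Fin (n + 1) => (i : ℕ) + 1) :=
    List.map_injective_iff.2 fun i j hij => Fin.ext (Nat.add_right_cancel hij)
  refine ⟨fun s hs => ?_, fun s hs t ht hst => ?_, fun p hp => ?_⟩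
  · rw [rightCouple_eq, mem_IIn_iff]
    exact ⟨_, _, Avoids321.isIncreasingCouple hs, rfl⟩
  · rw [rightCouple_eq, rightCouple_eq, Prod.mk.injEq] at hst
    exact Avoids321.eq_of_excedanceList_eq hs ht (hmap hst.1) (hmap hst.2)
  · obtain ⟨a, b, hab, rfl⟩ := mem_IIn_iff.1 hp
    obtain ⟨s, hs, hsa, hsb⟩ := exists_avoids321_of_isIncreasingCouple hab
    exact ⟨s, hs, by rw [rightCouple_eq, hsa, hsb]⟩
end

section
/- The number of pairs of strictly increasing integer sequences (a₁ < … < a_k, b₁ < … < b_k), over all 0 ≤ k ≤ n, with 1 ≤ a_t for all t, b_k ≤ n+1, and a_t < b_t for all t, equals the Catalan number C_{n+1} = (1/(n+2))·binom(2n+2, n+1). -/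
open List DyckStep

theorem List.count_replicate_of_ne {α : Type*} [BEq α] [LawfulBEq α] {a b : α} (h : b ≠ a)
    (m : ℕ) : (replicate m b).count a = 0 :=
  count_eq_zero_of_not_mem fun ha => h (eq_of_mem_replicate ha).symm

theorem length_le_of_isChain_lt {l : List ℕ} {k m : ℕ} (hl : IsChain (· < ·) (k :: l))
    (hm : ∀ x ∈ l, x ≤ m) : l.length ≤ m - k := by
  induction l generalizing k with
  | nil => simp
  | cons x l ih =>
    obtain ⟨hkx, hl⟩ := isChain_cons_cons.1 hl
    have hl_len := ih hl fun y hy => hm y (mem_cons_of_mem _ hy)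
    have hxm := hm x mem_cons_self
    rw [length_cons]
    omega

theorem forall_le_of_forall₂_lt {a b : List ℕ} {m : ℕ} (hab : Forall₂ (· < ·) a b)
    (hb : ∀ y ∈ b, y ≤ m + 1) : ∀ x ∈ a, x ≤ m := by
  induction hab with
  | nil => simp
  | cons hxy _ ih =>
    simp only [mem_cons, forall_eq_or_imp] at hb ⊢
    exact ⟨by omega, ih hb.2⟩

def StaysNonneg (d u : ℕ) (w : List DyckStep) : Prop :=
  ∀ i, d + (w.take i).count D ≤ u + (w.take i).count U

theorem staysNonneg_append {d u : ℕ} {l₁ l₂ : List DyckStep} :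
    StaysNonneg d u (l₁ ++ l₂) ↔
      StaysNonneg d u l₁ ∧ StaysNonneg (d + l₁.count D) (u + l₁.count U) l₂ := by
  refine ⟨fun h => ⟨fun i => ?_, fun i => ?_⟩, fun ⟨h₁, h₂⟩ i => ?_⟩
  · rcases le_total i l₁.length with hi | hi
    · simpa [take_append_of_le_length hi] using h i
    · simpa [take_of_length_le hi] using h l₁.length
  · simpa [take_length_add_append, add_assoc] using h (l₁.length + i)
  · rw [take_append]
    rcases le_total i l₁.length with hi | hi
    · simpa [Nat.sub_eq_zero_of_le hi] using h₁ i
    · simpa [take_of_length_le hi, add_assoc] using h₂ (i - l₁.length)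

theorem staysNonneg_replicate_U {d u m : ℕ} : StaysNonneg d u (replicate m U) ↔ d ≤ u := by
  refine ⟨fun h => by simpa using h 0, fun h i => ?_⟩
  rw [take_replicate, count_replicate_self, count_replicate_of_ne (by decide)]
  omega

theorem staysNonneg_replicate_D {d u m : ℕ} : StaysNonneg d u (replicate m D) ↔ d + m ≤ u := by
  refine ⟨fun h => by simpa [take_replicate, count_replicate] using h m, fun h i => ?_⟩
  rw [take_replicate, count_replicate_self, count_replicate_of_ne (by decide)]
  omega

/-- Reading `w` after `d` down-steps and `u` up-steps, a valley is recorded as the number of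
down-steps before it together with the number of up-steps up to and including the one after
it. -/
def valleys : List DyckStep → ℕ → ℕ → List ℕ × List ℕ
  | [], _, _ => ([], [])
  | U :: w, d, u => valleys w d (u + 1)
  | [D], _, _ => ([], [])
  | D :: U :: w, d, u =>
      ((d + 1) :: (valleys w (d + 1) (u + 1)).1, (u + 1) :: (valleys w (d + 1) (u + 1)).2)
  | D :: D :: w, d, u => valleys (D :: w) (d + 1) u

theorem isChain_valleys_fst (w : List DyckStep) (d u : ℕ) :
    IsChain (· < ·) (d :: (valleys w d u).1) := by
  fun_induction valleys w d u with
  | case4 w d u ih => exact ih.cons_cons (by omega)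
  | case5 w d u ih => exact ih.imp_head (by omega)
  | _ => simp [*]

theorem isChain_valleys_snd (w : List DyckStep) (d u : ℕ) :
    IsChain (· < ·) (u :: (valleys w d u).2) := by
  fun_induction valleys w d u with
  | case2 w d u ih => exact ih.imp_head (by omega)
  | case4 w d u ih => exact ih.cons_cons (by omega)
  | _ => simp [*]

theorem valleys_snd_le (w : List DyckStep) (d u : ℕ) :
    ∀ y ∈ (valleys w d u).2, y ≤ u + w.count U := by
  fun_induction valleys w d u with
  | case1 | case3 => simp
  | case2 w d u ih =>
    intro y hy
    have hy_le := ih y hy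
    rw [count_cons_self]
    omega
  | case4 w d u ih =>
    intro y hy
    rw [count_cons_of_ne (by decide), count_cons_self]
    rcases mem_cons.1 hy with rfl | hy
    · omega
    · have hy_le := ih y hy
      omega
  | case5 w d u ih => simpa using ih

theorem forall₂_valleys {w : List DyckStep} {d u : ℕ} (h : StaysNonneg d u w) :
    Forall₂ (· < ·) (valleys w d u).1 (valleys w d u).2 := by
  fun_induction valleys w d u with
  | case1 | case3 => simp
  | case2 w d u ih =>
    exact ih (by simpa using (staysNonneg_append (l₁ := [U]) (l₂ := w)).1 h |>.2)
  | case4 w d u ih =>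
    have hdu : d + 1 ≤ u := by simpa using h 1
    exact .cons (by omega)
      (ih (by simpa using (staysNonneg_append (l₁ := [D, U]) (l₂ := w)).1 h |>.2))
  | case5 w d u ih =>
    exact ih (by simpa using (staysNonneg_append (l₁ := [D]) (l₂ := D :: w)).1 h |>.2)

theorem valleys_replicate_U_append (m : ℕ) (w : List DyckStep) (d u : ℕ) :
    valleys (replicate m U ++ w) d u = valleys w d (u + m) := by
  induction m generalizing u with
  | zero => rfl
  | succ m ih => rw [replicate_succ, cons_append, valleys, ih, add_right_comm, add_assoc]

theorem valleys_replicate_D (m : ℕ) (d u : ℕ) : valleys (replicate m D) d u = ([], []) := by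
  induction m generalizing d with
  | zero => rfl
  | succ m ih => cases m with
    | zero => rfl
    | succ m => rw [replicate_succ, replicate_succ, valleys, ← replicate_succ, ih]

theorem valleys_replicate_D_append_U (m : ℕ) (w : List DyckStep) (d u : ℕ) :
    valleys (replicate (m + 1) D ++ U :: w) d u =
      ((d + m + 1) :: (valleys w (d + m + 1) (u + 1)).1,
        (u + 1) :: (valleys w (d + m + 1) (u + 1)).2) := by
  induction m generalizing d with
  | zero => rfl
  | succ m ih =>
    rw [replicate_succ, cons_append, replicate_succ, cons_append, valleys, ← cons_append,
      ← replicate_succ, ih, add_right_comm d 1]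
    rfl

/-- The path from the state of `d` down-steps and `u` up-steps to `n + 1` of each whose valleys,
recorded as in `valleys`, are the `(aₜ, bₜ)`; the up-step right after each valley is written out
separately. -/
def valleyPath (n : ℕ) : List ℕ → List ℕ → ℕ → ℕ → List DyckStep
  | a :: as, b :: bs, d, u =>
      replicate (b - 1 - u) U ++ replicate (a - d) D ++ U :: valleyPath n as bs a b
  | _, _, d, u => replicate (n + 1 - u) U ++ replicate (n + 1 - d) D

theorem count_U_valleyPath {n : ℕ} {a b : List ℕ} {d u : ℕ} (hb : IsChain (· < ·) (u :: b))
    (hbn : ∀ y ∈ b, y ≤ n + 1) : (valleyPath n a b d u).count U = n + 1 - u := by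
  fun_induction valleyPath n a b d u with
  | case1 a as b bs d u ih =>
    obtain ⟨hub, hb⟩ := isChain_cons_cons.1 hb
    have hbn₁ := hbn b mem_cons_self
    rw [count_append, count_append, count_replicate_self, count_replicate_of_ne (by decide),
      count_cons_self, ih hb fun y hy => hbn y (mem_cons_of_mem _ hy)]
    omega
  | case2 => rw [count_append, count_replicate_self, count_replicate_of_ne (by decide), add_zero]

theorem count_D_valleyPath {n : ℕ} {a b : List ℕ} {d u : ℕ} (ha : IsChain (· < ·) (d :: a))
    (hab : Forall₂ (· < ·) a b) (hbn : ∀ y ∈ b, y ≤ n + 1) :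
    (valleyPath n a b d u).count D = n + 1 - d := by
  fun_induction valleyPath n a b d u with
  | case1 a as b bs d u ih =>
    obtain ⟨hda, ha⟩ := isChain_cons_cons.1 ha
    obtain ⟨hab₁, hab⟩ := forall₂_cons.1 hab
    have hbn₁ := hbn b mem_cons_self
    rw [count_append, count_append, count_replicate_self, count_replicate_of_ne (by decide),
      count_cons_of_ne (by decide), ih ha hab fun y hy => hbn y (mem_cons_of_mem _ hy)]
    omega
  | case2 => rw [count_append, count_replicate_self, count_replicate_of_ne (by decide), zero_add]

theorem staysNonneg_valleyPath {n : ℕ} {a b : List ℕ} {d u : ℕ} (ha : IsChain (· < ·) (d :: a))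
    (hb : IsChain (· < ·) (u :: b)) (hab : Forall₂ (· < ·) a b) (hbn : ∀ y ∈ b, y ≤ n + 1)
    (hdu : d ≤ u) (hun : u ≤ n + 1) : StaysNonneg d u (valleyPath n a b d u) := by
  fun_induction valleyPath n a b d u with
  | case1 a as b bs d u ih =>
    obtain ⟨hda, ha⟩ := isChain_cons_cons.1 ha
    obtain ⟨hub, hb⟩ := isChain_cons_cons.1 hb
    obtain ⟨hab₁, hab⟩ := forall₂_cons.1 hab
    have hbn₁ := hbn b mem_cons_self
    have ih := ih ha hb hab (fun y hy => hbn y (mem_cons_of_mem _ hy)) hab₁.le hbn₁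
    rw [← singleton_append, ← replicate_one, ← append_assoc, staysNonneg_append,
      staysNonneg_append, staysNonneg_append, staysNonneg_replicate_U, staysNonneg_replicate_D,
      staysNonneg_replicate_U]
    simp only [count_append, count_replicate_self, count_replicate_of_ne (by decide : U ≠ D),
      count_replicate_of_ne (by decide : D ≠ U)]
    refine ⟨⟨⟨hdu, by omega⟩, by omega⟩, ?_⟩
    rwa [show d + (0 + (a - d) + 0) = a by omega, show u + (b - 1 - u + 0 + 1) = b by omega]
  | case2 =>
    rw [staysNonneg_append, staysNonneg_replicate_U, staysNonneg_replicate_D,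
      count_replicate_self, count_replicate_of_ne (by decide)]
    omega

theorem valleys_valleyPath {n : ℕ} {a b : List ℕ} {d u : ℕ} (hab : a.length = b.length)
    (ha : IsChain (· < ·) (d :: a)) (hb : IsChain (· < ·) (u :: b)) :
    valleys (valleyPath n a b d u) d u = (a, b) := by
  fun_induction valleyPath n a b d u with
  | case1 a as b bs d u ih =>
    obtain ⟨hda, ha⟩ := isChain_cons_cons.1 ha
    obtain ⟨hub, hb⟩ := isChain_cons_cons.1 hb
    obtain ⟨k, rfl⟩ := Nat.exists_eq_add_of_lt hda
    obtain ⟨j, rfl⟩ := Nat.exists_eq_add_of_lt hub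
    rw [show u + j + 1 - 1 - u = j by omega, show d + k + 1 - d = k + 1 by omega, append_assoc,
      valleys_replicate_U_append, valleys_replicate_D_append_U, ih (by simpa using hab) ha hb]
  | case2 as bs d u h =>
    match as, bs, hab with
    | [], [], _ => rw [valleys_replicate_U_append, valleys_replicate_D]
    | [], _ :: _, hab | _ :: _, [], hab => simp at hab
    | _ :: _, _ :: _, _ => exact (h _ _ _ _ rfl rfl).elim

theorem valleyPath_eq_U_cons {n : ℕ} {a b : List ℕ} {d u : ℕ} (hun : u ≤ n)
    (hb : IsChain (· < ·) ((u + 1) :: b)) :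
    valleyPath n a b d u = U :: valleyPath n a b d (u + 1) := by
  match a, b with
  | a :: as, b :: bs =>
    have hub := (isChain_cons_cons.1 hb).1
    rw [valleyPath, valleyPath, show b - 1 - u = b - 1 - (u + 1) + 1 by omega, replicate_succ]
    rfl
  | [], _ | _ :: _, [] =>
    simp only [valleyPath]
    rw [show n + 1 - u = n + 1 - (u + 1) + 1 by omega, replicate_succ]
    rfl

theorem valleyPath_eq_D_cons {n : ℕ} {a b : List ℕ} {d u : ℕ}
    (h : (valleyPath n a b (d + 1) u).head? = some D) :
    valleyPath n a b d u = D :: valleyPath n a b (d + 1) u := by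
  match a, b with
  | a :: as, b :: bs =>
    simp only [valleyPath] at h ⊢
    have hp : b - 1 - u = 0 ∧ a - (d + 1) ≠ 0 := by
      simp only [append_assoc, head?_append, head?_replicate] at h
      split_ifs at h <;> simp_all
    rw [hp.1, show a - d = a - (d + 1) + 1 by omega, replicate_succ]
    rfl
  | [], _ | _ :: _, [] =>
    simp only [valleyPath] at h ⊢
    have hp : n + 1 - u = 0 ∧ n + 1 - (d + 1) ≠ 0 := by
      simpa [head?_append, head?_replicate] using h
    rw [hp.1, show n + 1 - d = n + 1 - (d + 1) + 1 by omega, replicate_succ]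
    rfl

theorem valleyPath_valleys {n : ℕ} {w : List DyckStep} {d u : ℕ} (hd : d + w.count D = n + 1)
    (hu : u + w.count U = n + 1) :
    valleyPath n (valleys w d u).1 (valleys w d u).2 d u = w := by
  fun_induction valleys w d u with
  | case1 d u =>
    simp only [count_nil, add_zero] at hd hu
    simp [valleyPath, hd, hu]
  | case2 w d u ih =>
    rw [count_cons_of_ne (by decide)] at hd
    rw [count_cons_self] at hu
    rw [valleyPath_eq_U_cons (by omega) (isChain_valleys_snd w d (u + 1)), ih hd (by omega)]
  | case3 d u =>
    rw [count_singleton_self] at hd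
    rw [count_cons_of_ne (by decide), count_nil] at hu
    simp only [valleyPath]
    rw [show n + 1 - u = 0 by omega, show n + 1 - d = 1 by omega]
    rfl
  | case4 w d u ih =>
    rw [count_cons_self, count_cons_of_ne (by decide)] at hd
    rw [count_cons_of_ne (by decide), count_cons_self] at hu
    simp only [valleyPath, Nat.add_sub_cancel, Nat.sub_self, add_tsub_cancel_left,
      ih (by omega) (by omega)]
    rfl
  | case5 w d u ih =>
    rw [count_cons_self] at hd
    rw [count_cons_of_ne (by decide)] at hu
    have ih := ih (by omega) hu
    rw [valleyPath_eq_D_cons (by rw [ih]; rfl), ih]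

theorem mem_IIn_iff_s11 {n : ℕ} {a b : List ℕ} :
    (a, b) ∈ IIn n ↔ IsChain (· < ·) (0 :: a) ∧ IsChain (· < ·) (0 :: b) ∧
      (∀ y ∈ b, y ≤ n + 1) ∧ Forall₂ (· < ·) a b := by
  have forall₂_iff : Forall₂ (· < ·) a b ↔
      a.length = b.length ∧ ∀ t (h₁ : t < a.length) (h₂ : t < b.length), a[t] < b[t] := by
    simp [forall₂_iff_get]
  simp only [IIn, Set.mem_ofPred_eq]
  constructor
  · rintro ⟨hlen, -, ha, hb, ha₁, hbn, hlt⟩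
    have hab : Forall₂ (· < ·) a b := forall₂_iff.2 ⟨hlen, hlt⟩
    refine ⟨IsChain.cons ha fun x hx => ha₁ x (mem_of_mem_head? hx),
      IsChain.cons hb fun y hy => ?_, hbn, hab⟩
    cases hab with
    | nil => simp at hy
    | cons hxy _ =>
      rw [head?_cons, Option.mem_some_iff] at hy
      omega
  · rintro ⟨ha, hb, hbn, hab⟩
    refine ⟨hab.length_eq, ?_, ha.tail, hb.tail, fun x hx => ha.rel_cons hx, hbn,
      (forall₂_iff.1 hab).2⟩
    simpa using length_le_of_isChain_lt ha (forall_le_of_forall₂_lt hab hbn)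

def IIn.toDyckWord {n : ℕ} (x : IIn n) : DyckWord where
  toList := valleyPath n x.1.1 x.1.2 0 0
  count_U_eq_count_D := by
    obtain ⟨⟨a, b⟩, hx⟩ := x
    obtain ⟨ha, hb, hbn, hab⟩ := mem_IIn_iff_s11.1 hx
    rw [count_U_valleyPath hb hbn, count_D_valleyPath ha hab hbn]
  count_D_le_count_U := by
    obtain ⟨⟨a, b⟩, hx⟩ := x
    obtain ⟨ha, hb, hbn, hab⟩ := mem_IIn_iff_s11.1 hx
    simpa [StaysNonneg] using staysNonneg_valleyPath ha hb hab hbn le_rfl (Nat.zero_le _)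

theorem IIn.semilength_toDyckWord {n : ℕ} (x : IIn n) :
    (IIn.toDyckWord x).semilength = n + 1 := by
  obtain ⟨⟨a, b⟩, hx⟩ := x
  obtain ⟨-, hb, hbn, -⟩ := mem_IIn_iff_s11.1 hx
  exact count_U_valleyPath hb hbn

theorem valleys_mem_IIn {n : ℕ} (p : DyckWord) (hp : p.semilength = n + 1) :
    valleys p.toList 0 0 ∈ IIn n := by
  have hU : p.toList.count U = n + 1 := hp
  refine mem_IIn_iff_s11.2 ⟨isChain_valleys_fst _ _ _, isChain_valleys_snd _ _ _, fun y hy => ?_,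
    forall₂_valleys fun i => by simpa using p.count_D_le_count_U i⟩
  simpa [hU] using valleys_snd_le _ _ _ y hy

def IIn.equivDyckWord (n : ℕ) : IIn n ≃ {p : DyckWord // p.semilength = n + 1} where
  toFun x := ⟨IIn.toDyckWord x, IIn.semilength_toDyckWord x⟩
  invFun p := ⟨valleys p.1.toList 0 0, valleys_mem_IIn p.1 p.2⟩
  left_inv := by
    rintro ⟨⟨a, b⟩, hx⟩
    obtain ⟨ha, hb, -, hab⟩ := mem_IIn_iff_s11.1 hx
    exact Subtype.ext (valleys_valleyPath hab.length_eq ha hb)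
  right_inv := by
    rintro ⟨p, hp⟩
    have hU : p.toList.count U = n + 1 := hp
    have hD : p.toList.count D = n + 1 := p.count_U_eq_count_D ▸ hU
    exact Subtype.ext (DyckWord.ext (valleyPath_valleys (w := p.toList) (by omega) (by omega)))

theorem stmt11 (n : ℕ) :
    (IIn n).ncard = Nat.choose (2 * n + 2) (n + 1) / (n + 2) := by
  rw [← Nat.card_coe_set_eq, Nat.card_congr (IIn.equivDyckWord n), Nat.card_eq_fintype_card,
    DyckWord.card_dyckWord_semilength_eq_catalan, catalan_eq_centralBinom_div, Nat.centralBinom]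
  rfl
end

section
/- The number of 321-avoiding permutations of {1,…,m} equals the Catalan number C_m = (1/(m+1))·binom(2m, m). -/
/-!
A 321-avoiding permutation `σ` is increasing on its excedance set `A = {i | i < σ i}` and on the
complement: an inversion `i < j` with `σ j < σ i` between two excedances (or two non-excedances)
extends, by counting the values below `σ j` (or above `σ i`), to a `321` pattern. Hence `σ` is
the unique permutation mapping `A` increasingly onto `B = σ(A)` and `Aᶜ` increasingly onto `Bᶜ`.
Conversely, for any `A`, `B` of equal size this permutation is a union of two increasing
sequences, so it avoids `321`, and its excedance set is `A` exactly when the `k`-th element of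
`B` exceeds the `k`-th element of `A` for every `k`. Such ballot pairs `(A, B)` correspond to Dyck
words of semilength `m` by reading, for `t = 0, …, m - 1`, a down step iff `t ∈ B` and then an up
step iff `t ∈ A`; there are `catalan m` of those.
-/

open Finset DyckStep

section General
variable {α : Type*}

theorem Equiv.subtypeCongr_apply_of_pos {p q : α → Prop} [DecidablePred p] [DecidablePred q]
    (e : {x // p x} ≃ {x // q x}) (f : {x // ¬p x} ≃ {x // ¬q x}) {x : α} (hx : p x) :
    Equiv.subtypeCongr e f x = e ⟨x, hx⟩ := by
  simp [Equiv.subtypeCongr, Equiv.sumCompl_symm_apply_of_pos hx]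

theorem Equiv.subtypeCongr_apply_of_neg {p q : α → Prop} [DecidablePred p] [DecidablePred q]
    (e : {x // p x} ≃ {x // q x}) (f : {x // ¬p x} ≃ {x // ¬q x}) {x : α} (hx : ¬p x) :
    Equiv.subtypeCongr e f x = f ⟨x, hx⟩ := by
  simp [Equiv.subtypeCongr, Equiv.sumCompl_symm_apply_of_neg hx]

def OrderIso.ofCardEq {β γ : Type*} [LinearOrder β] [Fintype β] [LinearOrder γ] [Fintype γ]
    (h : Fintype.card β = Fintype.card γ) : β ≃o γ :=
  (Fintype.orderIsoFinOfCardEq β h).symm.trans (Fintype.orderIsoFinOfCardEq γ rfl)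

variable [Fintype α]

theorem card_filter_and_add_card_filter_not_and (P r : α → Prop) [DecidablePred P]
    [DecidablePred r] : #{y | P y ∧ r y} + #{y | ¬P y ∧ r y} = #{y | r y} := by
  rw [← card_filter_add_card_filter_not (s := {y | r y}) P]
  simp only [filter_filter, and_comm]

variable [LinearOrder α]

theorem card_filter_and_lt_lt_card_filter_and_le {r : α → Prop} [DecidablePred r] {a b : α}
    (hr : r b) (hab : a ≤ b) : #{y | r y ∧ y < a} < #{y | r y ∧ y ≤ b} :=
  card_lt_card <| (ssubset_iff_of_subset (monotone_filter_right _ fun _ _ hy ↦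
    ⟨hy.1, hy.2.le.trans hab⟩)).2 ⟨b, by simpa using hr, by simp [hab]⟩

namespace OrderIso
variable {p q : α → Prop} [DecidablePred p] [DecidablePred q]

theorem card_filter_and_lt_apply (e : {x // p x} ≃o {x // q x}) (a : {x // p x}) :
    #{y | q y ∧ y < e a} = #{y | p y ∧ y < a} := by
  simp only [← Fintype.card_subtype]
  exact Fintype.card_congr <|
    (Equiv.subtypeSubtypeEquivSubtypeInter q (· < (e a).1)).symm.trans <|
    (e.toEquiv.subtypeEquiv (p := (·.1 < a.1)) (q := (·.1 < (e a).1))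
      fun _ ↦ e.lt_iff_lt.symm).symm.trans <|
    Equiv.subtypeSubtypeEquivSubtypeInter p (· < a.1)

theorem card_filter_and_le_apply (e : {x // p x} ≃o {x // q x}) (a : {x // p x}) :
    #{y | q y ∧ y ≤ e a} = #{y | p y ∧ y ≤ a} := by
  simp only [← Fintype.card_subtype]
  exact Fintype.card_congr <|
    (Equiv.subtypeSubtypeEquivSubtypeInter q (· ≤ (e a).1)).symm.trans <|
    (e.toEquiv.subtypeEquiv (p := (·.1 ≤ a.1)) (q := (·.1 ≤ (e a).1))
      fun _ ↦ e.le_iff_le.symm).symm.trans <|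
    Equiv.subtypeSubtypeEquivSubtypeInter p (· ≤ a.1)

theorem lt_apply_of_card_filter_le (e : {x // p x} ≃o {x // q x})
    (h : ∀ x, #{y | q y ∧ y ≤ x} ≤ #{y | p y ∧ y < x}) (a : {x // p x}) : a.1 < e a := by
  by_contra! hle
  have := h (e a)
  rw [card_filter_and_le_apply] at this
  exact this.not_gt (card_filter_and_lt_lt_card_filter_and_le a.2 hle)

theorem apply_le_of_card_filter_le (e : {x // p x} ≃o {x // q x})
    (h : ∀ x, #{y | p y ∧ y ≤ x} ≤ #{y | q y ∧ y ≤ x}) (a : {x // p x}) : (e a).1 ≤ a := by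
  by_contra! hlt
  have hq : #{y | q y ∧ y ≤ a.1} ≤ #{y | q y ∧ y < e a} :=
    card_le_card (monotone_filter_right _ fun _ _ hy ↦ ⟨hy.1, hy.2.trans_lt hlt⟩)
  rw [card_filter_and_lt_apply] at hq
  exact (h a).not_gt (hq.trans_lt (card_filter_and_lt_lt_card_filter_and_le a.2 le_rfl))

end OrderIso

/-- Equivalently, `#A = #B` and the `k`-th smallest element of `B` is larger than the `k`-th
smallest element of `A` for every `k`. -/
structure IsBallotPair (A B : Finset α) : Prop where
  card_eq : #A = #B
  card_filter_le (x : α) : #{y | y ∈ B ∧ y ≤ x} ≤ #{y | y ∈ A ∧ y < x}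

theorem IsBallotPair.card_filter_compl_le {A B : Finset α} (h : IsBallotPair A B) (x : α) :
    #{y | y ∉ A ∧ y ≤ x} ≤ #{y | y ∉ B ∧ y ≤ x} := by
  have hA := card_filter_and_add_card_filter_not_and (· ∈ A) (· ≤ x)
  have hB := card_filter_and_add_card_filter_not_and (· ∈ B) (· ≤ x)
  have hlt : #{y | y ∈ A ∧ y < x} ≤ #{y | y ∈ A ∧ y ≤ x} :=
    card_le_card (monotone_filter_right _ fun _ _ hy ↦ ⟨hy.1, hy.2.le⟩)
  have := h.card_filter_le x
  omega

namespace Equiv.Perm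

theorem card_filter_apply_lt (σ : Perm α) (v : α) : #{y | σ y < v} = #{y | y < v} :=
  card_nbij' σ σ.symm (fun _ ↦ by simp) (fun _ ↦ by simp) (fun _ _ ↦ by simp)
    (fun _ _ ↦ by simp)

theorem exists_gt_apply_lt_of_inversion (σ : Perm α) {i j : α} (hij : i < j) (hσ : σ j < σ i)
    (hj : j ≤ σ j) : ∃ k, j < k ∧ σ k < σ j := by
  by_contra! h
  -- the `#{y | y < σ j} ≥ #{y | y < j}` values below `σ j` would all sit before `j`, but not at `i`
  have hsub : ({y | σ y < σ j} : Finset α) ⊆ ({y | y < j} : Finset α).erase i := by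
    intro y hy
    simp only [mem_filter, mem_univ, true_and, mem_erase] at hy ⊢
    refine ⟨fun hyi ↦ (hyi ▸ hy).not_gt hσ, lt_of_not_ge fun hjy ↦ ?_⟩
    rcases hjy.lt_or_eq' with hjy | rfl
    · exact (h y hjy).not_gt hy
    · exact hy.false
  have hle := card_le_card hsub
  rw [card_erase_of_mem (by simpa), card_filter_apply_lt] at hle
  have hmono : #{y | y < j} ≤ #{y | y < σ j} :=
    card_le_card (monotone_filter_right _ fun _ _ hy ↦ hy.trans_le hj)
  have hpos : 0 < #{y | y < j} := card_pos.2 ⟨i, by simpa⟩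
  omega

theorem exists_lt_apply_gt_of_inversion (σ : Perm α) {i j : α} (hij : i < j) (hσ : σ j < σ i)
    (hi : σ i ≤ i) : ∃ k, k < i ∧ σ i < σ k :=
  exists_gt_apply_lt_of_inversion (α := αᵒᵈ) σ hij hσ hi

def excedances (σ : Perm α) : Finset α := {i | i < σ i}

def excedanceValues (σ : Perm α) : Finset α := {v | σ.symm v < v}

@[simp] theorem mem_excedances {σ : Perm α} {i : α} : i ∈ excedances σ ↔ i < σ i := by
  simp [excedances]

@[simp] theorem mem_excedanceValues {σ : Perm α} {v : α} :
    v ∈ excedanceValues σ ↔ σ.symm v < v := by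
  simp [excedanceValues]

theorem symm_apply_mem_excedances {σ : Perm α} {v : α} :
    σ.symm v ∈ excedances σ ↔ v ∈ excedanceValues σ := by
  simp

theorem isBallotPair_excedances (σ : Perm α) :
    IsBallotPair (excedances σ) (excedanceValues σ) := by
  refine ⟨card_nbij' σ σ.symm (fun _ ↦ by simp) (fun _ ↦ by simp) (fun _ _ ↦ by simp)
    (fun _ _ ↦ by simp), fun x ↦ card_le_card_of_injOn σ.symm (fun v hv ↦ ?_)
      σ.symm.injective.injOn⟩
  simp only [coe_filter, mem_univ, true_and, Set.mem_ofPred_eq, mem_excedances,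
    mem_excedanceValues, apply_symm_apply] at hv ⊢
  exact ⟨hv.1, hv.1.trans_le hv.2⟩

theorem apply_eq_coe_orderIso_apply {p q : α → Prop} (σ : Perm α) (hσ : ∀ x, q (σ x) ↔ p x)
    (hmono : StrictMonoOn σ {x | p x}) (e : {x // p x} ≃o {x // q x}) (a : {x // p x}) :
    σ a = e a := by
  let e' : {x // p x} ≃o {x // q x} := StrictMono.orderIsoOfSurjective
    (σ.subtypeEquiv fun x ↦ (hσ x).symm) (fun a b hab ↦ hmono a.2 b.2 hab) (Equiv.surjective _)
  exact congrArg (fun g : {x // p x} ≃o {x // q x} ↦ (g a).1) (Subsingleton.elim e' e)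

variable {A B : Finset α}

def increasingPerm (h : #A = #B) : Perm α :=
  Equiv.subtypeCongr (OrderIso.ofCardEq (β := {x // x ∈ A}) (γ := {x // x ∈ B}) (by simpa)).toEquiv
    (OrderIso.ofCardEq (β := {x // x ∉ A}) (γ := {x // x ∉ B})
      (by simp [Fintype.card_subtype_compl, h])).toEquiv

theorem increasingPerm_apply_mem_iff (h : #A = #B) (x : α) :
    increasingPerm h x ∈ B ↔ x ∈ A := by
  by_cases hx : x ∈ A
  · simp only [increasingPerm, subtypeCongr_apply_of_pos _ _ hx, hx, iff_true]
    exact Subtype.property _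
  · simp only [increasingPerm, subtypeCongr_apply_of_neg _ _ hx, hx, iff_false]
    exact Subtype.property (p := (· ∉ B)) _

theorem strictMonoOn_increasingPerm (h : #A = #B) :
    StrictMonoOn (increasingPerm h) {x | x ∈ A} := fun a ha b hb hab ↦ by
  simp only [increasingPerm, subtypeCongr_apply_of_pos _ _ ha, subtypeCongr_apply_of_pos _ _ hb,
    OrderIso.coe_toEquiv]
  exact Subtype.coe_lt_coe.2 (OrderIso.strictMono _ (Subtype.coe_lt_coe.1 hab :
    (⟨a, ha⟩ : {x // x ∈ A}) < ⟨b, hb⟩))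

theorem strictMonoOn_compl_increasingPerm (h : #A = #B) :
    StrictMonoOn (increasingPerm h) {x | x ∉ A} := fun a ha b hb hab ↦ by
  simp only [increasingPerm, subtypeCongr_apply_of_neg _ _ ha, subtypeCongr_apply_of_neg _ _ hb,
    OrderIso.coe_toEquiv]
  exact Subtype.coe_lt_coe.2 (OrderIso.strictMono _ (Subtype.coe_lt_coe.1 hab :
    (⟨a, ha⟩ : {x // x ∉ A}) < ⟨b, hb⟩))

theorem eq_increasingPerm (σ : Perm α) (h : #A = #B) (hσ : ∀ x, σ x ∈ B ↔ x ∈ A)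
    (hA : StrictMonoOn σ {x | x ∈ A}) (hAc : StrictMonoOn σ {x | x ∉ A}) :
    σ = increasingPerm h := by
  ext x
  by_cases hx : x ∈ A
  · rw [increasingPerm, subtypeCongr_apply_of_pos _ _ hx, OrderIso.coe_toEquiv]
    exact apply_eq_coe_orderIso_apply σ hσ hA _ ⟨x, hx⟩
  · rw [increasingPerm, subtypeCongr_apply_of_neg _ _ hx, OrderIso.coe_toEquiv]
    exact apply_eq_coe_orderIso_apply σ (q := (· ∉ B)) (fun x ↦ not_congr (hσ x)) hAc _ ⟨x, hx⟩

theorem excedances_increasingPerm (hAB : IsBallotPair A B) :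
    excedances (increasingPerm hAB.card_eq) = A := by
  ext x
  rw [mem_excedances]
  by_cases hx : x ∈ A
  · simp only [increasingPerm, subtypeCongr_apply_of_pos _ _ hx, hx, iff_true,
      OrderIso.coe_toEquiv]
    exact OrderIso.lt_apply_of_card_filter_le _ hAB.card_filter_le ⟨x, hx⟩
  · simp only [increasingPerm, subtypeCongr_apply_of_neg _ _ hx, hx, iff_false, not_lt,
      OrderIso.coe_toEquiv]
    exact OrderIso.apply_le_of_card_filter_le _ hAB.card_filter_compl_le ⟨x, hx⟩

theorem excedanceValues_increasingPerm (hAB : IsBallotPair A B) :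
    excedanceValues (increasingPerm hAB.card_eq) = B := by
  ext v
  rw [← symm_apply_mem_excedances, excedances_increasingPerm hAB,
    ← increasingPerm_apply_mem_iff hAB.card_eq, apply_symm_apply]

end Equiv.Perm

end General

section Avoids321
variable {n : ℕ} {σ : Equiv.Perm (Fin n)}
open Equiv.Perm

theorem Avoids321.strictMonoOn_excedances_s12 (hσ : Avoids321 σ) :
    StrictMonoOn σ {x | x ∈ excedances σ} := fun i _ j hj hij ↦ by
  by_contra! hle
  have hlt : σ j < σ i := hle.lt_of_ne (σ.injective.ne hij.ne')
  obtain ⟨k, hjk, hk⟩ := exists_gt_apply_lt_of_inversion σ hij hlt (mem_excedances.1 hj).le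
  exact hσ ⟨i, j, k, hij, hjk, hk, hlt⟩

theorem Avoids321.strictMonoOn_compl_excedances_s12 (hσ : Avoids321 σ) :
    StrictMonoOn σ {x | x ∉ excedances σ} := fun i hi j _ hij ↦ by
  by_contra! hle
  have hlt : σ j < σ i := hle.lt_of_ne (σ.injective.ne hij.ne')
  obtain ⟨k, hki, hk⟩ := exists_lt_apply_gt_of_inversion σ hij hlt
    (not_lt.1 (mem_excedances.not.1 hi))
  exact hσ ⟨k, i, j, hki, hij, hlt, hk⟩

theorem Avoids321.eq_increasingPerm (hσ : Avoids321 σ) :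
    σ = increasingPerm (isBallotPair_excedances σ).card_eq :=
  Equiv.Perm.eq_increasingPerm σ _ (fun _ ↦ by simp) hσ.strictMonoOn_excedances_s12
    hσ.strictMonoOn_compl_excedances_s12

theorem avoids321_of_strictMonoOn (p : Fin n → Prop) (hp : StrictMonoOn σ {x | p x})
    (hnp : StrictMonoOn σ {x | ¬p x}) : Avoids321 σ := by
  rintro ⟨i, j, k, hij, hjk, hkj, hji⟩
  have flip : ∀ {a b}, a < b → σ b < σ a → (p a ↔ ¬p b) := fun hab hba ↦
    ⟨fun ha hb ↦ (hp ha hb hab).not_gt hba,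
      fun hb ↦ by_contra fun ha ↦ (hnp ha hb hab).not_gt hba⟩
  have := flip hij hji
  have := flip hjk hkj
  have := flip (hij.trans hjk) (hkj.trans hji)
  tauto

theorem avoids321_increasingPerm {A B : Finset (Fin n)} (h : #A = #B) :
    Avoids321 (increasingPerm h) :=
  avoids321_of_strictMonoOn (· ∈ A) (strictMonoOn_increasingPerm h)
    (strictMonoOn_compl_increasingPerm h)

def avoids321EquivBallotPairs (n : ℕ) :
    {σ : Equiv.Perm (Fin n) // Avoids321 σ} ≃
      {AB : Finset (Fin n) × Finset (Fin n) // IsBallotPair AB.1 AB.2} where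
  toFun σ := ⟨(excedances σ.1, excedanceValues σ.1), isBallotPair_excedances σ.1⟩
  invFun AB := ⟨increasingPerm AB.2.card_eq, avoids321_increasingPerm AB.2.card_eq⟩
  left_inv σ := Subtype.ext σ.2.eq_increasingPerm.symm
  right_inv AB := Subtype.ext <| Prod.ext (excedances_increasingPerm AB.2)
    (excedanceValues_increasingPerm AB.2)

end Avoids321

section BallotStep
variable (A B : Finset ℕ)

/-- With these steps the prefix of length `2 t + 1` has height
`2 (#{a ∈ A | a < t} - #{b ∈ B | b ≤ t}) + 1`. -/
def ballotStep (i : ℕ) : DyckStep :=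
  if i % 2 = 0 then if i / 2 ∈ B then D else U else if i / 2 ∈ A then U else D

@[simp] theorem ballotStep_two_mul (t : ℕ) : ballotStep A B (2 * t) = if t ∈ B then D else U := by
  simp [ballotStep]

@[simp] theorem ballotStep_two_mul_add_one (t : ℕ) :
    ballotStep A B (2 * t + 1) = if t ∈ A then U else D := by
  simp [ballotStep, Nat.add_mod, Nat.mul_add_div]

theorem count_map_ballotStep_two_mul (k : ℕ) :
    ((List.range (2 * k)).map (ballotStep A B)).count U + Nat.count (· ∈ B) k
        = k + Nat.count (· ∈ A) k ∧
      ((List.range (2 * k)).map (ballotStep A B)).count D + Nat.count (· ∈ A) k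
        = k + Nat.count (· ∈ B) k := by
  induction k with
  | zero => simp
  | succ k ih =>
    rw [show 2 * (k + 1) = 2 * k + 1 + 1 by ring, List.range_succ, List.range_succ,
      Nat.count_succ, Nat.count_succ]
    simp only [List.map_append, List.count_append, List.map_cons, List.map_nil,
      ballotStep_two_mul, ballotStep_two_mul_add_one]
    split_ifs <;> simp <;> omega

theorem count_U_eq_count_D_two_mul_iff (k : ℕ) :
    ((List.range (2 * k)).map (ballotStep A B)).count U
        = ((List.range (2 * k)).map (ballotStep A B)).count D ↔
      Nat.count (· ∈ A) k = Nat.count (· ∈ B) k := by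
  have := count_map_ballotStep_two_mul A B k
  omega

theorem count_D_le_count_U_two_mul_iff (k : ℕ) :
    ((List.range (2 * k)).map (ballotStep A B)).count D
        ≤ ((List.range (2 * k)).map (ballotStep A B)).count U ↔
      Nat.count (· ∈ B) k ≤ Nat.count (· ∈ A) k := by
  have := count_map_ballotStep_two_mul A B k
  omega

theorem count_D_le_count_U_two_mul_add_one_iff (k : ℕ) :
    ((List.range (2 * k + 1)).map (ballotStep A B)).count D
        ≤ ((List.range (2 * k + 1)).map (ballotStep A B)).count U ↔
      Nat.count (· ∈ B) (k + 1) ≤ Nat.count (· ∈ A) k := by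
  have := count_map_ballotStep_two_mul A B k
  rw [List.range_succ, Nat.count_succ]
  simp only [List.map_append, List.count_append, List.map_cons, List.map_nil,
    ballotStep_two_mul]
  split_ifs <;> simp <;> omega

theorem count_D_le_count_U_map_ballotStep {n : ℕ}
    (h : ∀ k < n, Nat.count (· ∈ B) (k + 1) ≤ Nat.count (· ∈ A) k) {i : ℕ} (hi : i ≤ 2 * n) :
    ((List.range i).map (ballotStep A B)).count D
      ≤ ((List.range i).map (ballotStep A B)).count U := by
  obtain ⟨k, rfl | rfl⟩ := i.even_or_odd'
  · rw [count_D_le_count_U_two_mul_iff]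
    rcases k with _ | k
    · simp
    · exact (h k (by omega)).trans (Nat.count_monotone _ k.le_succ)
  · exact (count_D_le_count_U_two_mul_add_one_iff A B k).2 (h k (by omega))

end BallotStep

section BallotDyck
variable {n : ℕ}

theorem count_mem_map_valEmbedding (A : Finset (Fin n)) (k : ℕ) :
    Nat.count (· ∈ A.map Fin.valEmbedding) k = #{y | y ∈ A ∧ (y : ℕ) < k} := by
  rw [Nat.count_eq_card_filter_range, ← card_map Fin.valEmbedding]
  congr 1
  ext t
  simp only [mem_filter, mem_range, mem_map, mem_univ, true_and, Fin.valEmbedding_apply]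
  constructor
  · rintro ⟨htk, a, ha, rfl⟩
    exact ⟨a, ⟨ha, htk⟩, rfl⟩
  · rintro ⟨a, ⟨ha, hak⟩, rfl⟩
    exact ⟨hak, a, ha, rfl⟩

theorem isBallotPair_iff_count {A B : Finset (Fin n)} :
    IsBallotPair A B ↔
      Nat.count (· ∈ A.map Fin.valEmbedding) n = Nat.count (· ∈ B.map Fin.valEmbedding) n ∧
        ∀ k < n, Nat.count (· ∈ B.map Fin.valEmbedding) (k + 1)
          ≤ Nat.count (· ∈ A.map Fin.valEmbedding) k := by
  have hcard (C : Finset (Fin n)) : #{y | y ∈ C ∧ (y : ℕ) < n} = #C := by simp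
  have hlt (C : Finset (Fin n)) (x : Fin n) :
      #{y | y ∈ C ∧ (y : ℕ) < x} = #{y | y ∈ C ∧ y < x} := by
    simp only [Fin.lt_def]
  have hle (C : Finset (Fin n)) (x : Fin n) :
      #{y | y ∈ C ∧ (y : ℕ) < x + 1} = #{y | y ∈ C ∧ y ≤ x} := by
    simp only [Fin.le_def, Nat.lt_succ_iff]
  simp only [count_mem_map_valEmbedding, hcard]
  refine ⟨fun h ↦ ⟨h.card_eq, fun k hk ↦ ?_⟩, fun h ↦ ⟨h.1, fun x ↦ ?_⟩⟩
  · have := h.card_filter_le ⟨k, hk⟩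
    rwa [← hle, ← hlt] at this
  · simpa only [hle, hlt] using h.2 x x.2

def IsBallotPair.dyckWord {A B : Finset (Fin n)} (h : IsBallotPair A B) : DyckWord where
  toList := (List.range (2 * n)).map
    (ballotStep (A.map Fin.valEmbedding) (B.map Fin.valEmbedding))
  count_U_eq_count_D := (count_U_eq_count_D_two_mul_iff _ _ n).2 (isBallotPair_iff_count.1 h).1
  count_D_le_count_U i := by
    rw [← List.map_take, List.take_range]
    exact count_D_le_count_U_map_ballotStep _ _ (isBallotPair_iff_count.1 h).2 (min_le_right _ _)

theorem IsBallotPair.semilength_dyckWord {A B : Finset (Fin n)} (h : IsBallotPair A B) :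
    h.dyckWord.semilength = n := by
  have hlen : h.dyckWord.toList.length = 2 * n := by simp [IsBallotPair.dyckWord]
  have := h.dyckWord.two_mul_semilength_eq_length
  omega

def DyckWord.oddUps (n : ℕ) (p : DyckWord) : Finset (Fin n) :=
  {t | p.toList[2 * (t : ℕ) + 1]? = some U}

def DyckWord.evenDowns (n : ℕ) (p : DyckWord) : Finset (Fin n) :=
  {t | p.toList[2 * (t : ℕ)]? = some D}

theorem IsBallotPair.oddUps_dyckWord {A B : Finset (Fin n)} (h : IsBallotPair A B) :
    h.dyckWord.oddUps n = A := by
  ext t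
  simp [DyckWord.oddUps, IsBallotPair.dyckWord, Fin.val_inj,
    List.getElem?_range (by omega : 2 * (t : ℕ) + 1 < 2 * n)]

theorem IsBallotPair.evenDowns_dyckWord {A B : Finset (Fin n)} (h : IsBallotPair A B) :
    h.dyckWord.evenDowns n = B := by
  ext t
  simp [DyckWord.evenDowns, IsBallotPair.dyckWord, Fin.val_inj]

theorem DyckWord.map_ballotStep_oddUps_evenDowns (p : DyckWord) (hp : p.semilength = n) :
    (List.range (2 * n)).map (ballotStep ((p.oddUps n).map Fin.valEmbedding)
      ((p.evenDowns n).map Fin.valEmbedding)) = p.toList := by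
  have hlen : p.toList.length = 2 * n := by rw [← p.two_mul_semilength_eq_length, hp]
  refine List.ext_getElem? fun i ↦ ?_
  rcases lt_or_ge i (2 * n) with hi | hi
  · obtain ⟨c, hc⟩ : ∃ c, p.toList[i]? = some c := ⟨_, List.getElem?_eq_getElem (hlen ▸ hi)⟩
    rw [List.getElem?_map, List.getElem?_range hi, hc, Option.map_some, Option.some_inj]
    obtain ⟨t, rfl | rfl⟩ := i.even_or_odd'
    · have hmem : t ∈ (p.evenDowns n).map Fin.valEmbedding ↔ c = D := by
        simp only [mem_map, DyckWord.evenDowns, mem_filter, mem_univ, true_and,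
          Fin.valEmbedding_apply]
        exact ⟨fun ⟨a, ha, hat⟩ ↦ by simpa [hat, hc] using ha,
          fun hcD ↦ ⟨⟨t, by omega⟩, by simp [hc, hcD], rfl⟩⟩
      rw [ballotStep_two_mul]
      cases c <;> simp_all
    · have hmem : t ∈ (p.oddUps n).map Fin.valEmbedding ↔ c = U := by
        simp only [mem_map, DyckWord.oddUps, mem_filter, mem_univ, true_and,
          Fin.valEmbedding_apply]
        exact ⟨fun ⟨a, ha, hat⟩ ↦ by simpa [hat, hc] using ha,
          fun hcU ↦ ⟨⟨t, by omega⟩, by simp [hc, hcU], rfl⟩⟩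
      rw [ballotStep_two_mul_add_one]
      cases c <;> simp_all
  · rw [List.getElem?_eq_none (by simpa using hi), List.getElem?_eq_none (by omega)]

theorem DyckWord.isBallotPair_oddUps_evenDowns (p : DyckWord) (hp : p.semilength = n) :
    IsBallotPair (p.oddUps n) (p.evenDowns n) := by
  have hw := p.map_ballotStep_oddUps_evenDowns hp
  refine isBallotPair_iff_count.2 ⟨?_, fun k hk ↦ ?_⟩
  · rw [← count_U_eq_count_D_two_mul_iff, hw]
    exact p.count_U_eq_count_D
  · rw [← count_D_le_count_U_two_mul_add_one_iff]
    have := p.count_D_le_count_U (2 * k + 1)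
    rwa [← hw, ← List.map_take, List.take_range, min_eq_left (by omega)] at this

def ballotPairsEquivDyckWords (n : ℕ) :
    {AB : Finset (Fin n) × Finset (Fin n) // IsBallotPair AB.1 AB.2} ≃
      {p : DyckWord // p.semilength = n} where
  toFun AB := ⟨AB.2.dyckWord, AB.2.semilength_dyckWord⟩
  invFun p := ⟨(p.1.oddUps n, p.1.evenDowns n), p.1.isBallotPair_oddUps_evenDowns p.2⟩
  left_inv AB := Subtype.ext (Prod.ext AB.2.oddUps_dyckWord AB.2.evenDowns_dyckWord)
  right_inv p := Subtype.ext (DyckWord.ext (p.1.map_ballotStep_oddUps_evenDowns p.2))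

end BallotDyck

theorem nat_card_avoids321 (n : ℕ) :
    Nat.card {σ : Equiv.Perm (Fin n) // Avoids321 σ} = catalan n := by
  rw [Nat.card_congr ((avoids321EquivBallotPairs n).trans (ballotPairsEquivDyckWords n)),
    Nat.card_eq_fintype_card, DyckWord.card_dyckWord_semilength_eq_catalan]

theorem stmt12 (m : ℕ) :
    {s : Equiv.Perm (Fin m) | Avoids321 s}.ncard
      = Nat.choose (2 * m) m / (m + 1) := by
  rw [← Nat.card_coe_set_eq, Set.coe_ofPred, nat_card_avoids321, catalan_eq_centralBinom_div,
    Nat.centralBinom_eq_two_mul_choose]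
end

section
/- The Catalan monoid CM_m of all order-preserving and order-decreasing total transformations of {1,…,m} has cardinality equal to the Catalan number C_m = (1/(m+1))·binom(2m, m). -/
open Finset

abbrev CM (n : ℕ) := {f : Fin n → Fin n // Monotone f ∧ ∀ i, f i ≤ i}

def build (m : ℕ) (k : Fin (m + 1)) (g : CM k) (h : CM (m - k)) : Fin (m + 1) → Fin (m + 1) :=
  fun i =>
    if hi : (i : ℕ) < k then
      ⟨(g.1 ⟨i, hi⟩ : ℕ), by have := (g.1 ⟨i, hi⟩).2; omega⟩
    else if hi2 : (i : ℕ) = k then k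
    else ⟨(k : ℕ) + (h.1 ⟨(i : ℕ) - ((k : ℕ) + 1), by omega⟩ : ℕ), by
      have := (h.1 ⟨(i : ℕ) - ((k : ℕ) + 1), by omega⟩).2
      have := k.2
      omega⟩

lemma build_mem (m : ℕ) (k : Fin (m + 1)) (g : CM k) (h : CM (m - k)) :
    Monotone (build m k g h) ∧ ∀ i, build m k g h i ≤ i := by
  constructor
  · intro i j hij
    rw [Fin.le_def] at hij ⊢
    unfold build
    split_ifs with h1 h2 h3 h4 h5 h6 h7 h8 <;> try simp only
    · exact g.2.1 (show (⟨(i : ℕ), h1⟩ : Fin k) ≤ ⟨j, h2⟩ from hij)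
    · exact le_of_lt ((g.1 ⟨i, h1⟩).2)
    · have := (g.1 ⟨i, h1⟩).2; omega
    · omega
    · omega
    · omega
    · omega
    · omega
    · have : ((⟨(i : ℕ) - ((k : ℕ) + 1), by omega⟩ : Fin (m - k))) ≤
          ⟨(j : ℕ) - ((k : ℕ) + 1), by omega⟩ := by
        rw [Fin.le_def]; simp only; omega
      have := h.2.1 this
      rw [Fin.le_def] at this
      omega
  · intro i
    rw [Fin.le_def]
    unfold build
    split_ifs with h1 h2 <;> try simp only
    · have := g.2.2 ⟨i, h1⟩
      rw [Fin.le_def] at this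
      exact this
    · omega
    · have := h.2.2 ⟨(i : ℕ) - ((k : ℕ) + 1), by omega⟩
      rw [Fin.le_def] at this
      simp only at this
      omega

lemma build_lt {m : ℕ} (k : Fin (m + 1)) (g : CM k) (h : CM (m - k))
    {i : Fin (m + 1)} (hi : (k : ℕ) < i) : (build m k g h i : ℕ) < i := by
  unfold build
  split_ifs with h1 h2 <;> try simp only
  · omega
  · omega
  · have := h.2.2 ⟨(i : ℕ) - ((k : ℕ) + 1), by omega⟩
    rw [Fin.le_def] at this
    simp only at this
    omega

lemma build_fixed {m : ℕ} (k : Fin (m + 1)) (g : CM k) (h : CM (m - k)) :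
    build m k g h k = k := by
  unfold build
  simp

lemma build_val_lt {m : ℕ} (k : Fin (m + 1)) (g : CM k) (h : CM (m - k))
    {i : Fin (m + 1)} (hi : (i : ℕ) < k) :
    (build m k g h i : ℕ) = (g.1 ⟨i, hi⟩ : ℕ) := by
  unfold build
  split_ifs with h1 h2 <;> first | rfl | omega

lemma build_val_gt {m : ℕ} (k : Fin (m + 1)) (g : CM k) (h : CM (m - k))
    {i : Fin (m + 1)} (hi : (k : ℕ) < i) (hj : (i : ℕ) - ((k : ℕ) + 1) < m - k) :
    (build m k g h i : ℕ) = (k : ℕ) + (h.1 ⟨(i : ℕ) - ((k : ℕ) + 1), hj⟩ : ℕ) := by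
  unfold build
  split_ifs with h1 h2 <;> first | rfl | omega

lemma build_eq {m : ℕ} (k : Fin (m + 1)) (g : CM k) (h : CM (m - k))
    (f : Fin (m + 1) → Fin (m + 1))
    (hlt : ∀ (i : Fin (m + 1)) (hi : (i : ℕ) < k), (f i : ℕ) = (g.1 ⟨i, hi⟩ : ℕ))
    (hfix : (f k : ℕ) = (k : ℕ))
    (hgt : ∀ (i : Fin (m + 1)) (hi : (k : ℕ) < i) (hj : (i : ℕ) - ((k : ℕ) + 1) < m - k),
      (f i : ℕ) = (k : ℕ) + (h.1 ⟨(i : ℕ) - ((k : ℕ) + 1), hj⟩ : ℕ)) :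
    build m k g h = f := by
  funext i
  apply Fin.ext
  rcases Nat.lt_trichotomy (i : ℕ) (k : ℕ) with h1 | h1 | h1
  · rw [build_val_lt k g h h1, hlt i h1]
  · have e0 : i = k := Fin.ext h1
    rw [e0, build_fixed, hfix]
  · have hj : (i : ℕ) - ((k : ℕ) + 1) < m - (k : ℕ) := by
      have := i.isLt; have := k.isLt; omega
    rw [build_val_gt k g h h1 hj, hgt i h1 hj]

def buildS (m : ℕ) : (Σ k : Fin (m + 1), CM k × CM (m - k)) → CM (m + 1) :=
  fun x => ⟨build m x.1 x.2.1 x.2.2, build_mem m x.1 x.2.1 x.2.2⟩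

lemma buildS_bij (m : ℕ) : Function.Bijective (buildS m) := by
  constructor
  · rintro ⟨k, g, h⟩ ⟨k', g', h'⟩ he
    simp only [buildS, Subtype.mk.injEq] at he
    have hk : k = k' := by
      by_contra hne
      rcases lt_or_gt_of_ne (fun hh : (k : ℕ) = k' => hne (Fin.ext hh)) with hlt | hlt
      · have h1 := build_lt k g h (i := k') hlt
        have h2 := build_fixed k' g' h'
        rw [he, h2] at h1; omega
      · have h1 := build_lt k' g' h' (i := k) hlt
        have h2 := build_fixed k g h
        rw [← he, h2] at h1; omega
    subst hk
    have hg : g = g' := by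
      apply Subtype.ext; funext i
      set i' : Fin (m + 1) := ⟨(i : ℕ), by have := i.2; have := k.2; omega⟩ with hi'
      have hv := congrArg Fin.val (congrFun he i')
      rw [build_val_lt k g h (i := i') i.2, build_val_lt k g' h' (i := i') i.2] at hv
      apply Fin.ext
      have e1 : (⟨(i' : ℕ), i.2⟩ : Fin k) = i := Fin.ext rfl
      rw [e1] at hv
      exact hv
    have hh : h = h' := by
      apply Subtype.ext; funext j
      have hj := j.2
      set i' : Fin (m + 1) := ⟨(k : ℕ) + 1 + (j : ℕ), by omega⟩ with hi'
      have hlt : (k : ℕ) < i' := by show (k : ℕ) < (k : ℕ) + 1 + (j : ℕ); omega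
      have hjlt : (i' : ℕ) - ((k : ℕ) + 1) < m - k := by
        show (k : ℕ) + 1 + (j : ℕ) - ((k : ℕ) + 1) < m - k; omega
      have hv := congrArg Fin.val (congrFun he i')
      rw [build_val_gt k g h hlt hjlt, build_val_gt k g' h' hlt hjlt] at hv
      apply Fin.ext
      have e1 : (⟨(i' : ℕ) - ((k : ℕ) + 1), hjlt⟩ : Fin (m - k)) = j :=
        Fin.ext (show (k : ℕ) + 1 + (j : ℕ) - ((k : ℕ) + 1) = (j : ℕ) by omega)
      rw [e1] at hv
      omega
    rw [hg, hh]
  · rintro ⟨f, hmono, hle⟩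
    classical
    have h0 : f ⟨0, Nat.succ_pos m⟩ = ⟨0, Nat.succ_pos m⟩ := by
      have := hle ⟨0, Nat.succ_pos m⟩
      rw [Fin.le_def] at this
      have h2 : (f ⟨0, Nat.succ_pos m⟩ : ℕ) ≤ 0 := this
      exact Fin.ext (show (f ⟨0, Nat.succ_pos m⟩ : ℕ) = 0 by omega)
    set P : ℕ → Prop := fun n => ∃ hn : n < m + 1, f ⟨n, hn⟩ = ⟨n, hn⟩ with hPdef
    have hP0 : P 0 := ⟨Nat.succ_pos m, h0⟩
    set k0 : ℕ := Nat.findGreatest P m with hk0def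
    have hk0m : k0 ≤ m := Nat.findGreatest_le m
    have hPk : P k0 := Nat.findGreatest_spec (Nat.zero_le m) hP0
    have hkfix : f ⟨k0, by omega⟩ = ⟨k0, by omega⟩ := hPk.2
    have hkmax : ∀ i : Fin (m + 1), f i = i → (i : ℕ) ≤ k0 := by
      intro i hi
      exact Nat.le_findGreatest (by have := i.2; omega) ⟨i.2, by rw [Fin.eta]; exact hi⟩
    have hkub : ∀ i : Fin (m + 1), k0 < (i : ℕ) → (f i : ℕ) < i := by
      intro i hi
      have h1 := hle i
      rw [Fin.le_def] at h1
      rcases lt_or_eq_of_le h1 with h2 | h2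
      · exact h2
      · exact absurd (hkmax i (Fin.ext h2)) (by omega)
    have hklb : ∀ i : Fin (m + 1), k0 ≤ (i : ℕ) → k0 ≤ (f i : ℕ) := by
      intro i hi
      have := hmono (show (⟨k0, by omega⟩ : Fin (m + 1)) ≤ i from hi)
      rw [Fin.le_def, hkfix] at this
      exact this
    have hle' : ∀ n (hn : n < m + 1), (f ⟨n, hn⟩ : ℕ) ≤ n := fun n hn => by
      have := hle ⟨n, hn⟩; rw [Fin.le_def] at this; exact this
    have hmono' : ∀ a b (ha : a < m + 1) (hb : b < m + 1), a ≤ b →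
        (f ⟨a, ha⟩ : ℕ) ≤ (f ⟨b, hb⟩ : ℕ) := fun a b ha hb hab => by
      have := hmono (show (⟨a, ha⟩ : Fin (m + 1)) ≤ ⟨b, hb⟩ from hab)
      rw [Fin.le_def] at this; exact this
    have hkub' : ∀ n (hn : n < m + 1), k0 < n → (f ⟨n, hn⟩ : ℕ) < n := fun n hn h =>
      hkub ⟨n, hn⟩ h
    have hklb' : ∀ n (hn : n < m + 1), k0 ≤ n → k0 ≤ (f ⟨n, hn⟩ : ℕ) := fun n hn h =>
      hklb ⟨n, hn⟩ h
    refine ⟨⟨⟨k0, by omega⟩,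
      ⟨fun i => ⟨(f ⟨(i : ℕ), by have h := i.isLt; change _ < k0 at h; omega⟩ : ℕ), by
        have h := i.isLt; change _ < k0 at h
        have := hle' (i : ℕ) (by omega)
        have := hkub' (i : ℕ) (by omega)
        omega⟩, ?_, ?_⟩,
      ⟨fun j => ⟨(f ⟨k0 + 1 + (j : ℕ), by have h := j.isLt; change _ < m - k0 at h; omega⟩ : ℕ) - k0, by
        have h := j.isLt; change _ < m - k0 at h
        have := hkub' (k0 + 1 + (j : ℕ)) (by omega) (by omega)
        omega⟩, ?_, ?_⟩⟩, ?_⟩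
    · intro a b hab
      rw [Fin.le_def] at hab ⊢
      have ha := a.isLt; change _ < k0 at ha
      have hb := b.isLt; change _ < k0 at hb
      show (f ⟨(a : ℕ), by omega⟩ : ℕ) ≤ (f ⟨(b : ℕ), by omega⟩ : ℕ)
      exact hmono' _ _ _ _ hab
    · intro i
      rw [Fin.le_def]
      have hi := i.isLt; change _ < k0 at hi
      show (f ⟨(i : ℕ), by omega⟩ : ℕ) ≤ (i : ℕ)
      exact hle' _ _
    · intro a b hab
      rw [Fin.le_def] at hab ⊢
      have ha := a.isLt; change _ < m - k0 at ha
      have hb := b.isLt; change _ < m - k0 at hb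
      show (f ⟨k0 + 1 + (a : ℕ), by omega⟩ : ℕ) - k0 ≤ (f ⟨k0 + 1 + (b : ℕ), by omega⟩ : ℕ) - k0
      have := hmono' (k0 + 1 + (a : ℕ)) (k0 + 1 + (b : ℕ)) (by omega) (by omega) (by omega)
      omega
    · intro j
      rw [Fin.le_def]
      have hj := j.isLt; change _ < m - k0 at hj
      show (f ⟨k0 + 1 + (j : ℕ), by omega⟩ : ℕ) - k0 ≤ (j : ℕ)
      have := hkub' (k0 + 1 + (j : ℕ)) (by omega) (by omega)
      omega
    · apply Subtype.ext
      show build m _ _ _ = f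
      apply build_eq
      · intro i hi
        have hi' : (i : ℕ) < k0 := hi
        show (f i : ℕ) = (f ⟨(i : ℕ), by omega⟩ : ℕ)
        have e0 : (⟨(i : ℕ), by omega⟩ : Fin (m + 1)) = i := Fin.ext rfl
        rw [e0]
      · exact congrArg Fin.val hkfix
      · intro i hi hj
        have hi' : k0 < (i : ℕ) := hi
        show (f i : ℕ) = k0 + ((f ⟨k0 + 1 + ((i : ℕ) - (k0 + 1)), by have := i.isLt; omega⟩ : ℕ) - k0)
        have e1 : (⟨k0 + 1 + ((i : ℕ) - (k0 + 1)), by have := i.isLt; omega⟩ : Fin (m + 1)) = i :=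
          Fin.ext (show k0 + 1 + ((i : ℕ) - (k0 + 1)) = (i : ℕ) by omega)
        rw [e1]
        have := hklb i (by omega)
        omega

lemma card_CM : ∀ m, Nat.card (CM m) = catalan m := by
  intro m
  induction m using Nat.strong_induction_on with
  | _ m ih =>
    match m with
    | 0 =>
      have : Unique (CM 0) := {
        default := ⟨fun i => i.elim0, fun i => i.elim0, fun i => i.elim0⟩
        uniq := fun a => Subtype.ext (funext fun i => i.elim0) }
      simp [Nat.card_unique, catalan_zero]
    | m + 1 =>
      have he := Nat.card_congr (Equiv.ofBijective _ (buildS_bij m))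
      rw [← he]
      have : ∀ n : ℕ, Fintype (CM n) := fun n => Fintype.ofFinite _
      haveI := this
      rw [Nat.card_eq_fintype_card, Fintype.card_sigma]
      rw [catalan_succ]
      congr 1
      funext k
      rw [Fintype.card_prod, ← Nat.card_eq_fintype_card, ← Nat.card_eq_fintype_card,
        ih k (by have := k.2; omega), ih (m - k) (by omega)]

/-- The Catalan monoid: order-preserving, order-decreasing transformations of `{1, …, m}`,
modelled as monotone maps `f : Fin m → Fin m` with `f i ≤ i`. -/
def CatalanMonoidSet (m : ℕ) : Set (Fin m → Fin m) :=
  {f | Monotone f ∧ ∀ i, f i ≤ i}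

theorem stmt14 (m : ℕ) :
    (CatalanMonoidSet m).ncard = Nat.choose (2 * m) m / (m + 1) := by
  have h1 : (CatalanMonoidSet m).ncard = Nat.card (CM m) :=
    (Nat.card_coe_set_eq _).symm
  rw [h1, card_CM, catalan_eq_centralBinom_div]
  rfl
end
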